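/- (Theorem 4.) A code C ⊆ Σ_q^{n^{⊗d}} is a 𝟏^{(d)}-deletion-correcting code if and only if it is a 𝟏^{(d)}-insertion-correcting code; that is, the deletion balls D_{𝟏}(X), X ∈ C, are pairwise disjoint if and only if the insertion balls I_{𝟏}(X), X ∈ C, are pairwise disjoint, where 𝟏 = (1, …, 1) is the all-one vector of length d. -/

import Mathlib

/-- A `q`-ary `d`-dimensional array: a size vector `size : Fin d → ℕ` together with an
entry of the alphabet `Fin q` for every index tuple inside the box
`[size 0] × ⋯ × [size (d-1)]`. -/
structure Arr (q d : ℕ) where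
  size : Fin d → ℕ
  val : ∀ x : Fin d → ℕ, (∀ i, x i < size i) → Fin q

/-- The index map associated with inserting a hyperplane at position `k` along axis `i`:
coordinates below `k` stay put, the others are shifted up by one (so that position `k`
along axis `i` is the freshly inserted hyperplane). -/
def insIdx {d : ℕ} (i : Fin d) (k : ℕ) (x : Fin d → ℕ) : Fin d → ℕ :=
  fun j => if j = i then (if x i < k then x i else x i + 1) else x j

/-- `InsertsTo i A B`: the array `B` is obtained from the array `A` by a single
`x_i`-insertion, i.e. by inserting one `(d-1)`-dimensional hyperplane (with arbitrary
entries) orthogonal to the `x_i`-axis. -/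
def InsertsTo {q d : ℕ} (i : Fin d) (A B : Arr q d) : Prop :=
  (∀ j, B.size j = if j = i then A.size j + 1 else A.size j) ∧
  ∃ k ≤ A.size i, ∀ (x : Fin d → ℕ) (hx : ∀ j, x j < A.size j)
    (hx' : ∀ j, insIdx i k x j < B.size j),
    A.val x hx = B.val (insIdx i k x) hx'

/-- `DeletesTo i A B`: the array `B` is obtained from `A` by a single `x_i`-deletion,
the inverse operation of an `x_i`-insertion. -/
def DeletesTo {q d : ℕ} (i : Fin d) (A B : Arr q d) : Prop :=
  InsertsTo i B A

/-- `Steps R t A B`: the array `B` is obtained from the array `A` by performing, for each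
axis `i`, exactly `t i` operations of type `R i` (in some order). -/
inductive Steps {q d : ℕ} (R : Fin d → Arr q d → Arr q d → Prop) :
    (Fin d → ℕ) → Arr q d → Arr q d → Prop
  | refl (A : Arr q d) : Steps R 0 A A
  | step {t : Fin d → ℕ} {A B C : Arr q d} (i : Fin d) :
      R i A B → Steps R t B C → Steps R (t + Pi.single i 1) A C

/-- The deletion ball `D_t(X)`: all arrays obtainable from `X` by a `t`-deletion,
i.e. by `t i` `x_i`-deletions for each axis `i`. -/
def delBall {q d : ℕ} (t : Fin d → ℕ) (X : Arr q d) : Set (Arr q d) :=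
  {Y | Steps DeletesTo t X Y}

/-- The insertion ball `I_t(X)`: all arrays obtainable from `X` by a `t`-insertion,
i.e. by `t i` `x_i`-insertions for each axis `i`. -/
def insBall {q d : ℕ} (t : Fin d → ℕ) (X : Arr q d) : Set (Arr q d) :=
  {Y | Steps InsertsTo t X Y}

/-- The insertion-deletion ball `ID_t(X)`: all arrays obtainable from `X` by a
`t^del`-deletion followed by a `t^ins`-insertion, for some decomposition
`t = t^ins + t^del`. -/
def insDelBall {q d : ℕ} (t : Fin d → ℕ) (X : Arr q d) : Set (Arr q d) :=
  {Z | ∃ tins tdel : Fin d → ℕ, tins + tdel = t ∧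
    ∃ W ∈ delBall tdel X, Z ∈ insBall tins W}

/-- `Σ_q^{n^{⊗d}}`: the set of `q`-ary `d`-dimensional arrays of cubic size `n × ⋯ × n`. -/
def cube (q d n : ℕ) : Set (Arr q d) := {A | A.size = fun _ => n}

/-- A code `C` is a `t`-deletion-correcting code if the deletion balls `D_t(X)`, `X ∈ C`,
are pairwise disjoint. -/
def IsDelCode {q d : ℕ} (t : Fin d → ℕ) (C : Set (Arr q d)) : Prop :=
  ∀ X ∈ C, ∀ Y ∈ C, X ≠ Y → delBall t X ∩ delBall t Y = ∅

/-- A code `C` is a `t`-insertion-correcting code if the insertion balls `I_t(X)`,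
`X ∈ C`, are pairwise disjoint. -/
def IsInsCode {q d : ℕ} (t : Fin d → ℕ) (C : Set (Arr q d)) : Prop :=
  ∀ X ∈ C, ∀ Y ∈ C, X ≠ Y → insBall t X ∩ insBall t Y = ∅

/-- A code `C` is a `t`-insdel-correcting code if the insertion-deletion balls `ID_t(X)`,
`X ∈ C`, are pairwise disjoint. -/
def IsInsDelCode {q d : ℕ} (t : Fin d → ℕ) (C : Set (Arr q d)) : Prop :=
  ∀ X ∈ C, ∀ Y ∈ C, X ≠ Y → insDelBall t X ∩ insDelBall t Y = ∅

/-! A `𝟏`-insertion `X → W` amounts to a position vector `p`: `X` is `W` with the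
hyperplane `p i` orthogonal to each axis `i` removed; a `𝟏`-deletion `X → Z` is a
`𝟏`-insertion `Z → X`. If `X` and `Y` arise from `W` by removing the hyperplanes at `p` and
at `p'`, removing both (or, on an axis with `p i = p' i`, that one and a neighbour) gives a
common `𝟏`-deletion of `X` and `Y`. Conversely, if `X` and `Y` arise from `Z` by inserting
hyperplanes at `a` and at `b`, inserting both into `Z` gives a common `𝟏`-insertion; the
cube of side `0` in positive dimension has a single element. -/

open Function

section

variable {q d : ℕ}

namespace Steps

variable {R : Fin d → Arr q d → Arr q d → Prop} {t : Fin d → ℕ} {A B C : Arr q d}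

theorem snoc (h : Steps R t A B) {i : Fin d} (hBC : R i B C) :
    Steps R (t + Pi.single i 1) A C := by
  induction h with
  | refl A => simpa using Steps.step i hBC (Steps.refl C)
  | step j hAB _ ih => rw [add_right_comm]; exact Steps.step j hAB (ih hBC)

theorem flip (h : Steps R t A B) : Steps (fun i A B => R i B A) t B A := by
  induction h with
  | refl A => exact Steps.refl A
  | step i hAB _ ih => exact ih.snoc hAB

end Steps

theorem steps_deletesTo_iff {t : Fin d → ℕ} {X Y : Arr q d} :
    Steps DeletesTo t X Y ↔ Steps InsertsTo t Y X :=
  ⟨Steps.flip, Steps.flip⟩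

def shiftAbove (t p x : Fin d → ℕ) : Fin d → ℕ :=
  fun i => if p i ≤ x i then x i + t i else x i

def unshiftAbove (k w : Fin d → ℕ) : Fin d → ℕ :=
  fun i => if k i < w i then w i - 1 else w i

theorem shiftAbove_lt {s s' t p x : Fin d → ℕ} (hs : ∀ i, s' i = s i + t i)
    (hx : ∀ i, x i < s i) (i : Fin d) : shiftAbove t p x i < s' i := by
  have := hx i; have := hs i
  simp only [shiftAbove]; split_ifs <;> omega

theorem shiftAbove_insIdx {t p x : Fin d → ℕ} {i : Fin d} (ht : t i = 0) (k : ℕ) :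
    shiftAbove t p (insIdx i k x) = shiftAbove (t + Pi.single i 1) (update p i k) x := by
  funext j
  rcases eq_or_ne j i with rfl | hj
  · simp only [shiftAbove, insIdx, if_true, Pi.add_apply, Pi.single_eq_same, update_self, ht]
    split_ifs <;> omega
  · simp [shiftAbove, insIdx, hj]

theorem insIdx_lt {i : Fin d} {k : ℕ} {s x : Fin d → ℕ} (hx : ∀ j, x j < s j) (j : Fin d) :
    insIdx i k x j < if j = i then s j + 1 else s j := by
  rcases eq_or_ne j i with rfl | hj
  · have := hx j
    simp only [insIdx, if_true]; split_ifs <;> omega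
  · simpa [insIdx, hj] using hx j

theorem unshiftAbove_shiftAbove_one (k x : Fin d → ℕ) :
    unshiftAbove k (shiftAbove 1 k x) = x := by
  funext i; simp only [unshiftAbove, shiftAbove, Pi.one_apply]; split_ifs <;> omega

theorem shiftAbove_one_ne (k x : Fin d → ℕ) (i : Fin d) : shiftAbove 1 k x i ≠ k i := by
  simp only [shiftAbove, Pi.one_apply]; split_ifs <;> omega

theorem unshiftAbove_lt {k w s : Fin d → ℕ} (hk : ∀ i, k i ≤ s i) (hw : ∀ i, w i < s i + 1)
    (hwk : ∀ i, w i ≠ k i) (i : Fin d) : unshiftAbove k w i < s i := by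
  have := hk i; have := hw i; have := hwk i
  simp only [unshiftAbove]; split_ifs <;> omega

namespace Arr

theorem ext' {A B : Arr q d} (hsize : A.size = B.size)
    (hval : ∀ x hA hB, A.val x hA = B.val x hB) : A = B := by
  obtain ⟨s, v⟩ := A
  obtain ⟨s', v'⟩ := B
  obtain rfl : s = s' := hsize
  congr
  funext x hx
  exact hval x hx hx

theorem val_congr (A : Arr q d) {x y : Fin d → ℕ} (h : x = y) (hx : ∀ i, x i < A.size i)
    (hy : ∀ i, y i < A.size i) : A.val x hx = A.val y hy := by
  subst h; rfl

def deleteAt (t a : Fin d → ℕ) (X : Arr q d) : Arr q d :=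
  ⟨fun i => X.size i - t i, fun z hz =>
    X.val (shiftAbove t a z) (shiftAbove_lt (fun i => by have := hz i; omega) hz)⟩

end Arr

theorem cube_zero_subsingleton (i : Fin d) : (cube q d 0).Subsingleton := by
  intro X (hX : X.size = _) Y (hY : Y.size = _)
  refine Arr.ext' (hX.trans hY.symm) fun x hx _ => absurd (hx i) ?_
  simp [hX]

/-- For `t ≤ 1`: `W` arises from `X` by inserting a hyperplane at position `p i` along every
axis `i` with `t i = 1`. -/
def InsertsAt (t p : Fin d → ℕ) (X W : Arr q d) : Prop :=
  (∀ i, W.size i = X.size i + t i) ∧ (∀ i, p i ≤ X.size i) ∧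
    ∀ x hx hw, X.val x hx = W.val (shiftAbove t p x) hw

namespace InsertsAt

variable {t p : Fin d → ℕ} {X W : Arr q d}

theorem val_eq (h : InsertsAt t p X W) {x : Fin d → ℕ} (hx : ∀ i, x i < X.size i) :
    X.val x hx = W.val (shiftAbove t p x) (shiftAbove_lt h.1 hx) :=
  h.2.2 x hx _

theorem eq_of_zero (h : InsertsAt 0 p X W) : X = W := by
  refine Arr.ext' (funext fun i => by simp [h.1 i]) fun x hx hw => ?_
  rw [h.val_eq hx]
  exact W.val_congr (funext fun i => by simp [shiftAbove]) _ _

end InsertsAt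

theorem insertsAt_deleteAt {t a : Fin d → ℕ} {X : Arr q d} (h : ∀ i, a i + t i ≤ X.size i) :
    InsertsAt t a (X.deleteAt t a) X :=
  ⟨fun i => by have := h i; simp only [Arr.deleteAt]; omega,
    fun i => by have := h i; simp only [Arr.deleteAt]; omega, fun _ _ _ => rfl⟩

theorem Steps.exists_insertsAt {t : Fin d → ℕ} {X W : Arr q d} (h : Steps InsertsTo t X W)
    (ht : ∀ i, t i ≤ 1) : ∃ p, InsertsAt t p X W := by
  induction h with
  | refl A =>
    exact ⟨0, fun i => by simp, fun i => by simp, fun x hx hw =>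
      A.val_congr (funext fun i => by simp [shiftAbove]) hx hw⟩
  | @step t A B C i hAB _ ih =>
    have hti : t i = 0 := by
      have := ht i; simp only [Pi.add_apply, Pi.single_eq_same] at this; omega
    obtain ⟨p, hBC⟩ := ih fun j => le_self_add.trans (ht j)
    obtain ⟨hsize, k, hk, hval⟩ := hAB
    refine ⟨update p i k, fun j => ?_, fun j => ?_, fun x hx hw => ?_⟩
    · rw [hBC.1 j, hsize j]
      rcases eq_or_ne j i with rfl | hj
      · simp [hti]
      · simp [hj]
    · rcases eq_or_ne j i with rfl | hj
      · simpa using hk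
      · simpa [hj, hsize j] using hBC.2.1 j
    · have hB : ∀ j, insIdx i k x j < B.size j := fun j => by rw [hsize j]; exact insIdx_lt hx j
      rw [hval x hx hB, hBC.val_eq hB]
      exact C.val_congr (shiftAbove_insIdx hti k) _ _

theorem InsertsAt.insertsTo_deleteAt {u p : Fin d → ℕ} {i : Fin d} {X W : Arr q d}
    (hu : u i = 0) (h : InsertsAt (u + Pi.single i 1) p X W) :
    InsertsTo i X (W.deleteAt u p) := by
  refine ⟨fun j => ?_, p i, h.2.1 i, fun x hx _ => ?_⟩
  · simp only [Arr.deleteAt, h.1 j, Pi.add_apply]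
    rcases eq_or_ne j i with rfl | hj
    · simp [hu]
    · simp [hj]
  · rw [h.val_eq hx]
    exact W.val_congr (by rw [shiftAbove_insIdx hu, update_eq_self]) _ _

theorem InsertsAt.steps {t p : Fin d → ℕ} {X W : Arr q d} (ht : ∀ i, t i ≤ 1)
    (h : InsertsAt t p X W) : Steps InsertsTo t X W := by
  obtain ⟨m, hm⟩ : ∃ m, ∑ i, t i = m := ⟨_, rfl⟩
  induction m generalizing t X with
  | zero =>
    obtain rfl : t = 0 := funext fun i => Finset.sum_eq_zero_iff.mp hm i (Finset.mem_univ i)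
    rw [h.eq_of_zero]
    exact Steps.refl W
  | succ m ih =>
    obtain ⟨i, hi⟩ : ∃ i, t i ≠ 0 := by
      by_contra! h0
      simp [h0] at hm
    obtain ⟨u, hu, rfl⟩ : ∃ u : Fin d → ℕ, u i = 0 ∧ t = u + Pi.single i 1 := by
      refine ⟨update t i 0, update_self i 0 t, funext fun j => ?_⟩
      rcases eq_or_ne j i with rfl | hj
      · have := ht j
        simp only [Pi.add_apply, update_self, Pi.single_eq_same]; omega
      · simp [hj]
    have hBW : InsertsAt u p (W.deleteAt u p) W := insertsAt_deleteAt fun j => by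
      have := h.1 j; have := h.2.1 j; simp only [Pi.add_apply] at *; omega
    refine Steps.step i (h.insertsTo_deleteAt hu) (ih (fun j => le_self_add.trans (ht j)) hBW ?_)
    simpa [Finset.sum_add_distrib] using hm

theorem mem_insBall_one_iff {X W : Arr q d} :
    W ∈ insBall 1 X ↔ ∃ p, InsertsAt 1 p X W :=
  ⟨fun h => h.exists_insertsAt fun _ => le_rfl, fun ⟨_, h⟩ => h.steps fun _ => le_rfl⟩

theorem mem_delBall_one_iff {X Z : Arr q d} :
    Z ∈ delBall 1 X ↔ ∃ a, InsertsAt 1 a Z X :=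
  steps_deletesTo_iff.trans mem_insBall_one_iff

theorem shiftAbove_one_comm (p p' z : Fin d → ℕ) :
    shiftAbove 1 p (shiftAbove 1 (fun i => if p i ≤ p' i then p' i - 1 else p' i) z) =
      shiftAbove 1 p' (shiftAbove 1 (fun i => if p' i ≤ p i then p i - 1 else p i) z) := by
  funext i
  simp only [shiftAbove, Pi.one_apply]
  split_ifs <;> omega

theorem InsertsAt.exists_common_deletion {p p' : Fin d → ℕ} {X Y W : Arr q d}
    (hX : ∀ i, 0 < X.size i) (hXW : InsertsAt 1 p X W) (hYW : InsertsAt 1 p' Y W) :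
    ∃ Z a b, InsertsAt 1 a Z X ∧ InsertsAt 1 b Z Y := by
  set a : Fin d → ℕ := fun i => if p i ≤ p' i then p' i - 1 else p' i
  set b : Fin d → ℕ := fun i => if p' i ≤ p i then p i - 1 else p i
  have hXY : ∀ i, X.size i = Y.size i := fun i => by
    have := hXW.1 i; have := hYW.1 i; simp only [Pi.one_apply] at *; omega
  refine ⟨X.deleteAt 1 a, a, b, insertsAt_deleteAt fun i => ?_, fun i => ?_, fun i => ?_,
    fun z hz hy => ?_⟩
  · have := hX i; have := hXW.2.1 i; have := hYW.2.1 i; have := hXY i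
    simp only [a, Pi.one_apply]; split_ifs <;> omega
  · have := hX i; have := hXY i
    simp only [Arr.deleteAt, Pi.one_apply]; omega
  · have := hX i; have := hXW.2.1 i; have := hYW.2.1 i; have := hXY i
    simp only [b, Arr.deleteAt, Pi.one_apply]; split_ifs <;> omega
  · rw [hYW.val_eq hy]
    show X.val (shiftAbove 1 a z) _ = _
    rw [hXW.val_eq]
    exact W.val_congr (shiftAbove_one_comm p p' z) _ _

theorem InsertsAt.val_eq_val_of_ne {a b : Fin d → ℕ} {X Y Z : Arr q d}
    (hZX : InsertsAt 1 a Z X) (hZY : InsertsAt 1 b Z Y) {y : Fin d → ℕ}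
    (hy : ∀ i, y i < Y.size i) (h : ∀ i, shiftAbove 1 (shiftAbove 1 (b + 1) a) y i ≠
      shiftAbove 1 a b i)
    (hx : ∀ i, unshiftAbove (shiftAbove 1 a b) (shiftAbove 1 (shiftAbove 1 (b + 1) a) y) i <
      X.size i) :
    Y.val y hy = X.val _ hx := by
  have hyb : ∀ i, y i ≠ b i := fun i hi => by
    have := h i
    simp only [shiftAbove, Pi.add_apply, Pi.one_apply] at this; split_ifs at this <;> omega
  have hz : ∀ i, unshiftAbove b y i < Z.size i := unshiftAbove_lt hZY.2.1
    (fun i => by have := hy i; have := hZY.1 i; simp only [Pi.one_apply] at *; omega) hyb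
  have hby : shiftAbove 1 b (unshiftAbove b y) = y := funext fun i => by
    have := hyb i; simp only [shiftAbove, unshiftAbove, Pi.one_apply]; split_ifs <;> omega
  have hax : shiftAbove 1 a (unshiftAbove b y) =
      unshiftAbove (shiftAbove 1 a b) (shiftAbove 1 (shiftAbove 1 (b + 1) a) y) :=
    funext fun i => by
      have := hyb i; have := h i
      simp only [shiftAbove, unshiftAbove, Pi.add_apply, Pi.one_apply] at *
      split_ifs at * <;> omega
  calc Y.val y hy = Y.val (shiftAbove 1 b (unshiftAbove b y)) (shiftAbove_lt hZY.1 hz) :=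
        Y.val_congr hby.symm _ _
    _ = Z.val _ hz := (hZY.val_eq hz).symm
    _ = X.val (shiftAbove 1 a (unshiftAbove b y)) (shiftAbove_lt hZX.1 hz) := hZX.val_eq hz
    _ = _ := X.val_congr hax _ _

theorem InsertsAt.exists_common_insertion {a b : Fin d → ℕ} {X Y Z : Arr q d}
    (hZX : InsertsAt 1 a Z X) (hZY : InsertsAt 1 b Z Y) :
    ∃ W p p', InsertsAt 1 p X W ∧ InsertsAt 1 p' Y W := by
  -- `W` is `Z` with both new hyperplanes, `X`'s placed first on ties: `X` misses `Y`'s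
  -- hyperplane, at `kX`, and `Y` misses `X`'s, at `kY`
  set kX := shiftAbove 1 a b
  set kY := shiftAbove 1 (b + 1) a
  have hXY : ∀ i, X.size i = Y.size i := fun i => by
    have := hZX.1 i; have := hZY.1 i; simp only [Pi.one_apply] at *; omega
  have hkX : ∀ i, kX i ≤ X.size i := fun i => by
    have := hZX.1 i; have := hZX.2.1 i; have := hZY.2.1 i
    simp only [kX, shiftAbove, Pi.one_apply] at *; split_ifs <;> omega
  have hkY : ∀ i, kY i ≤ Y.size i := fun i => by
    have := hZY.1 i; have := hZX.2.1 i; have := hZY.2.1 i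
    simp only [kY, shiftAbove, Pi.add_apply, Pi.one_apply] at *; split_ifs <;> omega
  have hX : ∀ i, (0 : Fin d → ℕ) i < X.size i := fun i => by
    have := hZX.1 i; simp only [Pi.one_apply, Pi.zero_apply] at *; omega
  let W : Arr q d := ⟨fun i => X.size i + 1, fun w hw =>
    if h : ∀ i, w i ≠ kX i then X.val (unshiftAbove kX w) (unshiftAbove_lt hkX hw h)
    else if h' : ∀ i, w i ≠ kY i then
      Y.val (unshiftAbove kY w) (unshiftAbove_lt hkY (fun i => hXY i ▸ hw i) h')
    -- `w` lies on both new hyperplanes: neither `X` nor `Y` constrains this entry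
    else X.val 0 hX⟩
  refine ⟨W, kX, kY, ⟨fun _ => rfl, hkX, fun x hx hw => ?_⟩,
    ⟨fun i => by simp [W, hXY], hkY, fun y hy hw => ?_⟩⟩
  · show _ = dite _ _ _
    rw [dif_pos (shiftAbove_one_ne kX x)]
    exact X.val_congr (unshiftAbove_shiftAbove_one kX x).symm _ _
  · show _ = dite _ _ _
    by_cases h : ∀ i, shiftAbove 1 kY y i ≠ kX i
    · rw [dif_pos h]
      exact hZX.val_eq_val_of_ne hZY hy h _
    · rw [dif_neg h, dif_pos (shiftAbove_one_ne kY y)]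
      exact Y.val_congr (unshiftAbove_shiftAbove_one kY y).symm _ _

theorem insBall_inter_nonempty_of_delBall {X Y : Arr q d}
    (h : (delBall 1 X ∩ delBall 1 Y).Nonempty) : (insBall 1 X ∩ insBall 1 Y).Nonempty := by
  obtain ⟨Z, hXZ, hYZ⟩ := h
  obtain ⟨a, hZX⟩ := mem_delBall_one_iff.mp hXZ
  obtain ⟨b, hZY⟩ := mem_delBall_one_iff.mp hYZ
  obtain ⟨W, p, p', hXW, hYW⟩ := hZX.exists_common_insertion hZY
  exact ⟨W, mem_insBall_one_iff.mpr ⟨p, hXW⟩, mem_insBall_one_iff.mpr ⟨p', hYW⟩⟩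

theorem delBall_inter_nonempty_of_insBall {X Y : Arr q d} (hX : ∀ i, 0 < X.size i)
    (h : (insBall 1 X ∩ insBall 1 Y).Nonempty) : (delBall 1 X ∩ delBall 1 Y).Nonempty := by
  obtain ⟨W, hXW, hYW⟩ := h
  obtain ⟨p, hXW⟩ := mem_insBall_one_iff.mp hXW
  obtain ⟨p', hYW⟩ := mem_insBall_one_iff.mp hYW
  obtain ⟨Z, a, b, hZX, hZY⟩ := hXW.exists_common_deletion hX hYW
  exact ⟨Z, mem_delBall_one_iff.mpr ⟨a, hZX⟩, mem_delBall_one_iff.mpr ⟨b, hZY⟩⟩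

end

theorem statement6_general (q d n : ℕ)
    (C : Set (Arr q d)) (hC : C ⊆ cube q d n) :
    IsDelCode (fun _ => 1) C ↔ IsInsCode (fun _ => 1) C := by
  by_cases hn : ∀ i : Fin d, 0 < n
  · refine forall₄_congr fun X hX Y hY => imp_congr_right fun _ => ?_
    have hXpos : ∀ i, 0 < X.size i := fun i => by rw [show X.size = _ from hC hX]; exact hn i
    rw [← Set.not_nonempty_iff_eq_empty, ← Set.not_nonempty_iff_eq_empty]
    exact not_congr ⟨insBall_inter_nonempty_of_delBall, delBall_inter_nonempty_of_insBall hXpos⟩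
  · obtain ⟨i, hi⟩ := not_forall.mp hn
    obtain rfl : n = 0 := Nat.eq_zero_of_not_pos hi
    have hC0 : C.Subsingleton := (cube_zero_subsingleton i).anti hC
    exact iff_of_true (fun X hX Y hY hXY => absurd (hC0 hX hY) hXY)
      (fun X hX Y hY hXY => absurd (hC0 hX hY) hXY)

/-- **Theorem 4.** A code `C ⊆ Σ_q^{n^{⊗d}}` is a `𝟏^{(d)}`-deletion-correcting code iff
it is a `𝟏^{(d)}`-insertion-correcting code, where `𝟏 = (1, …, 1)`. -/
theorem statement6 (q d n : ℕ) (hq : 2 ≤ q) (hd : 1 ≤ d)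
    (C : Set (Arr q d)) (hC : C ⊆ cube q d n) :
    IsDelCode (fun _ => 1) C ↔ IsInsCode (fun _ => 1) C :=
  statement6_general q d n C hC
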